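/- Let c > 0, D > 0, and let ν be a Borel measure on (0,∞) with Π(x) := ν((x,∞)). Suppose γ satisfies 0 < γ < c/D, ∫₀^∞ z e^{γ z} ν(dz) < ∞, and the Lundberg identity c γ − D γ² = ∫₀^∞ (e^{γ z} − 1) ν(dz). With k_D(x) = (c/D) e^{−(c/D) x} and g(u) = (1/c) ∫₀^u k_D(u − x) Π(x) dx, the mean of the tilted density equals μ := ∫₀^∞ x e^{γ x} g(x) dx = ( ∫₀^∞ z e^{γ z} ν(dz) − c + 2 D γ ) / ( γ (c − D γ) ). -/

import Mathlib

open MeasureTheory Set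

/-- The tail of the Lévy measure `ν`: `Π(x) = ν((x,∞))`. -/
noncomputable def nuTail (ν : Measure ℝ) (x : ℝ) : ℝ := (ν (Ioi x)).toReal

/-- The exponential density `k_D(x) = (c/D) e^{−(c/D)x}`. -/
noncomputable def kDens (c D x : ℝ) : ℝ := (c / D) * Real.exp (-(c / D) * x)

/-- The renewal kernel `g(u) = (1/c) ∫₀^u k_D(u−x) Π(x) dx`. -/
noncomputable def renKer (c D : ℝ) (ν : Measure ℝ) (u : ℝ) : ℝ :=
  (1 / c) * ∫ x in (0 : ℝ)..u, kDens c D (u - x) * nuTail ν x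

/-!
Expand the convolution `g` and exchange the order of integration twice; everything is
nonnegative, so Tonelli applies in `ℝ≥0∞`. With `β = c/D − γ > 0`, the inner integral
`∫_{x>y} x e^{γx} k_D(x−y) dx` equals `(c/D)(y/β + 1/β²) e^{γy}`, and the layer-cake formula
`∫₀^∞ Π(y) φ(y) dy = ∫ (∫₀^z φ) ν(dz)` moves the remaining integral onto `ν`. The resulting
integrand is a combination of `z e^{γz}` and `e^{γz} − 1`, and the Lundberg identity evaluates
the `ν`-integral of the latter.
-/

open Filter ENNReal Function

theorem lintegral_Ioi_lintegral_Ioc_swap {μ ν : Measure ℝ} [SFinite μ] [SFinite ν] (a : ℝ)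
    {F : ℝ → ℝ → ℝ≥0∞} (hF : Measurable (uncurry F)) :
    ∫⁻ x in Ioi a, ∫⁻ y in Ioc a x, F x y ∂ν ∂μ =
      ∫⁻ y in Ioi a, ∫⁻ x in Ici y, F x y ∂μ ∂ν := by
  set S : Set (ℝ × ℝ) := {p | a < p.2 ∧ p.2 ≤ p.1}
  have hS : MeasurableSet S :=
    (measurableSet_lt measurable_const measurable_snd).inter
      (measurableSet_le measurable_snd measurable_fst)
  have hx : ∀ x, ∫⁻ y in Ioc a x, F x y ∂ν = ∫⁻ y, S.indicator (uncurry F) (x, y) ∂ν :=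
    fun x => by rw [← lintegral_indicator measurableSet_Ioc]; rfl
  have hy : ∀ y ∈ Ioi a, ∫⁻ x in Ici y, F x y ∂μ = ∫⁻ x, S.indicator (uncurry F) (x, y) ∂μ :=
    fun y hy => by
      rw [← lintegral_indicator measurableSet_Ici]
      congr 1 with x
      simp [S, indicator, hy.out]
  have hxa : ∀ x ∉ Ioi a, ∫⁻ y in Ioc a x, F x y ∂ν = 0 := fun x hx => by
    rw [Ioc_eq_empty (by simpa using hx), Measure.restrict_empty, lintegral_zero_measure]
  have hya : ∀ y ∉ Ioi a, ∫⁻ x, S.indicator (uncurry F) (x, y) ∂μ = 0 := fun y hy => by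
    simp [S, indicator, show ¬a < y from hy]
  calc _ = ∫⁻ x, ∫⁻ y in Ioc a x, F x y ∂ν ∂μ :=
        setLIntegral_eq_of_support_subset (support_subset_iff'.2 hxa)
    _ = ∫⁻ x, ∫⁻ y, S.indicator (uncurry F) (x, y) ∂ν ∂μ := by simp_rw [hx]
    _ = ∫⁻ y, ∫⁻ x, S.indicator (uncurry F) (x, y) ∂μ ∂ν :=
        lintegral_lintegral_swap (hF.indicator hS).aemeasurable
    _ = ∫⁻ y in Ioi a, ∫⁻ x, S.indicator (uncurry F) (x, y) ∂μ ∂ν :=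
        (setLIntegral_eq_of_support_subset (support_subset_iff'.2 hya)).symm
    _ = _ := setLIntegral_congr_fun measurableSet_Ioi fun y hy' => (hy y hy').symm

theorem StronglyMeasurable.intervalIntegral_prod_right {E : Type*} [NormedAddCommGroup E]
    [NormedSpace ℝ E] {f : ℝ → ℝ → E} (hf : StronglyMeasurable (uncurry f)) (a : ℝ) :
    StronglyMeasurable fun x => ∫ y in a..x, f x y := by
  have hIoc : ∀ {l u : ℝ → ℝ}, Measurable l → Measurable u →
      StronglyMeasurable fun x => ∫ y in Ioc (l x) (u x), f x y := fun {l u} hl hu => by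
    have hS : MeasurableSet {p : ℝ × ℝ | p.2 ∈ Ioc (l p.1) (u p.1)} :=
      (measurableSet_lt (hl.comp measurable_fst) measurable_snd).inter
        (measurableSet_le measurable_snd (hu.comp measurable_fst))
    convert (hf.indicator hS).integral_prod_right' (ν := volume) using 2 with x
    rw [← integral_indicator measurableSet_Ioc]
    rfl
  exact (hIoc measurable_const measurable_id).sub (hIoc measurable_id measurable_const)

theorem measurable_measure_Ioi (ν : Measure ℝ) : Measurable fun t => ν (Ioi t) :=
  Antitone.measurable fun _ _ h => measure_mono (Ioi_subset_Ioi h)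

theorem lintegral_Ioi_measure_Ioi_mul (ν : Measure ℝ) {g : ℝ → ℝ}
    (hg : ∀ t > 0, IntervalIntegrable g volume 0 t) (hg0 : ∀ t > 0, 0 ≤ g t) :
    ∫⁻ t in Ioi 0, ν (Ioi t) * ENNReal.ofReal (g t) =
      ∫⁻ z in Ioi 0, ENNReal.ofReal (∫ t in 0..z, g t) ∂ν := by
  refine (setLIntegral_congr_fun measurableSet_Ioi fun t ht => ?_).trans
    (lintegral_comp_eq_lintegral_meas_lt_mul (ν.restrict (Ioi 0)) (f := id)
    ((ae_restrict_iff' measurableSet_Ioi).2 (Eventually.of_forall fun z hz => le_of_lt hz))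
    aemeasurable_id hg ((ae_restrict_iff' measurableSet_Ioi).2 (Eventually.of_forall hg0))).symm
  rw [Measure.restrict_apply' measurableSet_Ioi]
  congr 2
  exact (inter_eq_left.2 (Ioi_subset_Ioi ht.out.le)).symm

theorem lintegral_measure_Ioi (ν : Measure ℝ) :
    ∫⁻ t in Ioi 0, ν (Ioi t) = ∫⁻ z in Ioi 0, ENNReal.ofReal z ∂ν := by
  simpa using lintegral_Ioi_measure_Ioi_mul ν (g := 1)
    (fun _ _ => intervalIntegrable_const) (fun _ _ => zero_le_one)

theorem hasDerivAt_affine_mul_exp (p q r x : ℝ) :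
    HasDerivAt (fun y => (p * y + q) * Real.exp (r * y))
      ((r * (p * x + q) + p) * Real.exp (r * x)) x := by
  refine ((((hasDerivAt_id x).const_mul p).add_const q).mul
    ((hasDerivAt_id x).const_mul r).exp).congr_deriv ?_
  simp only [id]
  ring

theorem tendsto_affine_mul_exp_neg_atTop (p q : ℝ) {β : ℝ} (hβ : 0 < β) :
    Tendsto (fun x => (p * x + q) * Real.exp (-β * x)) atTop (nhds 0) := by
  simpa [Real.rpow_one, Real.rpow_zero, add_mul, mul_assoc] using
    ((tendsto_rpow_mul_exp_neg_mul_atTop_nhds_zero 1 β hβ).const_mul p).add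
      ((tendsto_rpow_mul_exp_neg_mul_atTop_nhds_zero 0 β hβ).const_mul q)

theorem hasDerivAt_primitive_mul_exp_neg {β : ℝ} (hβ : β ≠ 0) (x : ℝ) :
    HasDerivAt (fun x => (-(1 / β) * x + -(1 / β ^ 2)) * Real.exp (-β * x))
      (x * Real.exp (-β * x)) x :=
  (hasDerivAt_affine_mul_exp _ _ _ x).congr_deriv (by field_simp; ring)

theorem integrableOn_Ioi_mul_exp_neg {β : ℝ} (hβ : 0 < β) {y : ℝ} (hy : 0 ≤ y) :
    IntegrableOn (fun x => x * Real.exp (-β * x)) (Ioi y) :=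
  integrableOn_Ioi_deriv_of_nonneg' (fun x _ => hasDerivAt_primitive_mul_exp_neg hβ.ne' x)
    (fun _ hx => mul_nonneg (hy.trans hx.out.le) (Real.exp_pos _).le)
    (tendsto_affine_mul_exp_neg_atTop _ _ hβ)

theorem integral_Ioi_mul_exp_neg {β : ℝ} (hβ : 0 < β) {y : ℝ} (hy : 0 ≤ y) :
    ∫ x in Ioi y, x * Real.exp (-β * x) = (y / β + 1 / β ^ 2) * Real.exp (-β * y) := by
  rw [integral_Ioi_of_hasDerivAt_of_nonneg'
    (fun x _ => hasDerivAt_primitive_mul_exp_neg hβ.ne' x)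
    (fun _ hx => mul_nonneg (hy.trans hx.out.le) (Real.exp_pos _).le)
    (tendsto_affine_mul_exp_neg_atTop _ _ hβ)]
  ring

theorem integral_affine_mul_exp {γ : ℝ} (hγ : γ ≠ 0) (a b z : ℝ) :
    ∫ y in (0 : ℝ)..z, (a * y + b) * Real.exp (γ * y) =
      a / γ * (z * Real.exp (γ * z)) + (b / γ - a / γ ^ 2) * (Real.exp (γ * z) - 1) := by
  rw [intervalIntegral.integral_eq_sub_of_hasDerivAt
    (fun x _ => (hasDerivAt_affine_mul_exp (a / γ) (b / γ - a / γ ^ 2) γ x).congr_deriv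
      (by field_simp; ring))
    ((by fun_prop : Continuous fun y => (a * y + b) * Real.exp (γ * y)).intervalIntegrable 0 z)]
  simp only [mul_zero, Real.exp_zero]
  ring

theorem affine_mul_exp_primitive_nonneg {γ a b z : ℝ} (hγ : γ ≠ 0) (ha : 0 ≤ a) (hb : 0 ≤ b)
    (hz : 0 ≤ z) :
    0 ≤ a / γ * (z * Real.exp (γ * z)) + (b / γ - a / γ ^ 2) * (Real.exp (γ * z) - 1) :=
  integral_affine_mul_exp hγ a b z ▸ intervalIntegral.integral_nonneg hz fun _ hy =>
    mul_nonneg (add_nonneg (mul_nonneg ha hy.1) hb) (Real.exp_pos _).le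

theorem Real.exp_sub_one_le_mul_exp (t : ℝ) : Real.exp t - 1 ≤ t * Real.exp t := by
  have h := mul_le_mul_of_nonneg_right (Real.add_one_le_exp (-t)) (Real.exp_pos t).le
  rw [← Real.exp_add, neg_add_cancel, Real.exp_zero] at h
  linarith

section MomentBounds

variable {ν : Measure ℝ} {γ : ℝ}

theorem integrableOn_Ioi_id_of_mul_exp (hγ : 0 ≤ γ)
    (h : IntegrableOn (fun z => z * Real.exp (γ * z)) (Ioi 0) ν) :
    IntegrableOn (fun z => z) (Ioi 0) ν :=
  h.mono' measurable_id.aestronglyMeasurable <| (ae_restrict_iff' measurableSet_Ioi).2 <|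
    Eventually.of_forall fun z hz => by
      rw [Real.norm_of_nonneg hz.out.le]
      exact le_mul_of_one_le_right hz.out.le (Real.one_le_exp (mul_nonneg hγ hz.out.le))

theorem integrableOn_Ioi_exp_sub_one_of_mul_exp (hγ : 0 ≤ γ)
    (h : IntegrableOn (fun z => z * Real.exp (γ * z)) (Ioi 0) ν) :
    IntegrableOn (fun z => Real.exp (γ * z) - 1) (Ioi 0) ν :=
  (h.const_mul γ).mono'
    (by fun_prop : Continuous fun z => Real.exp (γ * z) - 1).aestronglyMeasurable <|
    (ae_restrict_iff' measurableSet_Ioi).2 <| Eventually.of_forall fun z hz => by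
      rw [Real.norm_of_nonneg (sub_nonneg.2 (Real.one_le_exp (mul_nonneg hγ hz.out.le))),
        ← mul_assoc]
      exact Real.exp_sub_one_le_mul_exp _

end MomentBounds

section Tail

variable {ν : Measure ℝ}

theorem measurable_nuTail : Measurable (nuTail ν) :=
  (measurable_measure_Ioi ν).ennreal_toReal

variable (hν : IntegrableOn (fun z => z) (Ioi 0) ν)
include hν

theorem integrableOn_nuTail : IntegrableOn (nuTail ν) (Ioi 0) := by
  refine ⟨measurable_nuTail.aestronglyMeasurable, (hasFiniteIntegral_iff_ofReal
    (Eventually.of_forall fun _ => toReal_nonneg)).2 ?_⟩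
  calc ∫⁻ t in Ioi 0, ENNReal.ofReal (nuTail ν t) ≤ ∫⁻ t in Ioi 0, ν (Ioi t) :=
        lintegral_mono fun _ => ofReal_toReal_le
    _ < ∞ := lintegral_measure_Ioi ν ▸ hν.lintegral_lt_top

theorem ae_ofReal_nuTail_eq :
    ∀ᵐ t ∂volume.restrict (Ioi 0), ENNReal.ofReal (nuTail ν t) = ν (Ioi t) := by
  filter_upwards [ae_lt_top (measurable_measure_Ioi ν)
    (lintegral_measure_Ioi ν ▸ hν.lintegral_lt_top.ne)] with t ht
  exact ofReal_toReal ht.ne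

end Tail

section RenewalKernel

variable {c D : ℝ}

theorem kDens_nonneg (h : 0 ≤ c / D) (t : ℝ) : 0 ≤ kDens c D t :=
  mul_nonneg h (Real.exp_pos _).le

theorem continuous_kDens : Continuous (kDens c D) := by
  unfold kDens; fun_prop

theorem measurable_renKer (ν : Measure ℝ) : Measurable (renKer c D ν) :=
  ((StronglyMeasurable.intervalIntegral_prod_right
    (f := fun u x => kDens c D (u - x) * nuTail ν x)
    ((continuous_kDens.comp (continuous_fst.sub continuous_snd)).measurable.mul
      (measurable_nuTail.comp measurable_snd)).stronglyMeasurable 0).measurable.const_mul _)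

variable (hc : 0 < c) (hD : 0 < D) {ν : Measure ℝ}
include hc hD

theorem renKer_nonneg {x : ℝ} (hx : 0 ≤ x) : 0 ≤ renKer c D ν x :=
  mul_nonneg (by positivity) (intervalIntegral.integral_nonneg hx fun _ _ =>
    mul_nonneg (kDens_nonneg (by positivity) _) toReal_nonneg)

variable (hν : IntegrableOn (fun z => z) (Ioi 0) ν)
include hν

theorem ofReal_renKer {x : ℝ} (hx : 0 < x) :
    ENNReal.ofReal (renKer c D ν x) =
      ENNReal.ofReal (1 / c) *
        ∫⁻ y in Ioc 0 x, ENNReal.ofReal (kDens c D (x - y)) * ν (Ioi y) := by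
  have hint : IntegrableOn (fun y => kDens c D (x - y) * nuTail ν y) (Ioc 0 x) :=
    ((integrableOn_nuTail hν).mono_set Ioc_subset_Ioi_self).continuousOn_mul_of_subset
      (continuous_kDens.comp (continuous_const.sub continuous_id)).continuousOn
      isCompact_Icc measurableSet_Ioc Ioc_subset_Icc_self
  rw [renKer, ENNReal.ofReal_mul (by positivity), intervalIntegral.integral_of_le hx.le,
    ofReal_integral_eq_lintegral_ofReal hint (Eventually.of_forall fun _ =>
      mul_nonneg (kDens_nonneg (by positivity) _) toReal_nonneg)]
  congr 1
  refine setLIntegral_congr_fun_ae measurableSet_Ioc ?_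
  filter_upwards [ae_imp_of_ae_restrict (ae_ofReal_nuTail_eq hν)] with y hy hyx
  rw [ENNReal.ofReal_mul (kDens_nonneg (by positivity) _), hy hyx.1]

theorem lintegral_ofReal_mul_renKer {w : ℝ → ℝ} (hw : Measurable w) (hw0 : ∀ x > 0, 0 ≤ w x) :
    ∫⁻ x in Ioi 0, ENNReal.ofReal (w x * renKer c D ν x) =
      ENNReal.ofReal (1 / c) *
        ∫⁻ y in Ioi 0, ν (Ioi y) * ∫⁻ x in Ioi y, ENNReal.ofReal (w x * kDens c D (x - y)) := by
  have hkx : ∀ y, Measurable fun x => ENNReal.ofReal (w x * kDens c D (x - y)) := fun _ =>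
    (hw.mul (continuous_kDens.comp (continuous_id.sub continuous_const)).measurable).ennreal_ofReal
  have hF : Measurable
      (uncurry fun x y => ENNReal.ofReal (w x * kDens c D (x - y)) * ν (Ioi y)) :=
    ((hw.comp measurable_fst).mul
      (continuous_kDens.comp (continuous_fst.sub continuous_snd)).measurable).ennreal_ofReal.mul
      ((measurable_measure_Ioi ν).comp measurable_snd)
  calc _ = ∫⁻ x in Ioi 0, ENNReal.ofReal (1 / c) *
        ∫⁻ y in Ioc 0 x, ENNReal.ofReal (w x * kDens c D (x - y)) * ν (Ioi y) := by
        refine setLIntegral_congr_fun measurableSet_Ioi fun x hx => ?_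
        rw [ENNReal.ofReal_mul (hw0 x hx), ofReal_renKer hc hD hν hx, mul_left_comm,
          ← lintegral_const_mul' _ _ ofReal_ne_top]
        simp_rw [← mul_assoc, ← ENNReal.ofReal_mul (hw0 x hx)]
    _ = ENNReal.ofReal (1 / c) *
        ∫⁻ y in Ioi 0, ∫⁻ x in Ici y, ENNReal.ofReal (w x * kDens c D (x - y)) * ν (Ioi y) := by
        rw [lintegral_const_mul' _ _ ofReal_ne_top, lintegral_Ioi_lintegral_Ioc_swap 0 hF]
    _ = _ := by
        congr 1
        refine lintegral_congr fun y => ?_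
        rw [lintegral_mul_const _ (hkx y), mul_comm, setLIntegral_congr Ioi_ae_eq_Ici]

end RenewalKernel

section Tilted

variable {c D : ℝ} (hc : 0 < c) (hD : 0 < D) {γ : ℝ}
include hc hD

theorem lintegral_Ioi_mul_exp_mul_kDens (hγ : γ < c / D) {y : ℝ} (hy : 0 ≤ y) :
    ∫⁻ x in Ioi y, ENNReal.ofReal (x * Real.exp (γ * x) * kDens c D (x - y)) =
      ENNReal.ofReal
        ((c / D / (c / D - γ) * y + c / D / (c / D - γ) ^ 2) * Real.exp (γ * y)) := by
  have hβ : 0 < c / D - γ := sub_pos.2 hγ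
  have hfun : ∀ x, x * Real.exp (γ * x) * kDens c D (x - y) =
      c / D * Real.exp (c / D * y) * (x * Real.exp (-(c / D - γ) * x)) := fun x => by
    have h : Real.exp (γ * x) * Real.exp (-(c / D) * (x - y)) =
        Real.exp (c / D * y) * Real.exp (-(c / D - γ) * x) := by
      rw [← Real.exp_add, ← Real.exp_add]; ring_nf
    rw [kDens]
    linear_combination x * (c / D) * h
  simp_rw [hfun]
  rw [← ofReal_integral_eq_lintegral_ofReal ((integrableOn_Ioi_mul_exp_neg hβ hy).const_mul _)
    ((ae_restrict_iff' measurableSet_Ioi).2 (Eventually.of_forall fun x hx => by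
      have := hy.trans hx.out.le; positivity)),
    integral_const_mul, integral_Ioi_mul_exp_neg hβ hy]
  congr 1
  rw [show γ * y = c / D * y + -(c / D - γ) * y by ring, Real.exp_add]
  field_simp

theorem lintegral_tilted_renKer {ν : Measure ℝ} (hγ0 : 0 < γ) (hγ : γ < c / D)
    (hint : IntegrableOn (fun z => z * Real.exp (γ * z)) (Ioi 0) ν) :
    ∫⁻ x in Ioi 0, ENNReal.ofReal (x * Real.exp (γ * x) * renKer c D ν x) =
      ENNReal.ofReal (1 / c * ∫ z in Ioi 0, c / D / (c / D - γ) / γ * (z * Real.exp (γ * z)) +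
        (c / D / (c / D - γ) ^ 2 / γ - c / D / (c / D - γ) / γ ^ 2) *
          (Real.exp (γ * z) - 1) ∂ν) := by
  have hβ : 0 < c / D - γ := sub_pos.2 hγ
  set a := c / D / (c / D - γ)
  set b := c / D / (c / D - γ) ^ 2
  have ha : 0 ≤ a := by positivity
  have hb : 0 ≤ b := by positivity
  have hφ : Continuous fun y => (a * y + b) * Real.exp (γ * y) := by fun_prop
  have hΦ : IntegrableOn (fun z => a / γ * (z * Real.exp (γ * z)) +
      (b / γ - a / γ ^ 2) * (Real.exp (γ * z) - 1)) (Ioi 0) ν :=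
    (hint.const_mul _).add ((integrableOn_Ioi_exp_sub_one_of_mul_exp hγ0.le hint).const_mul _)
  calc _ = ENNReal.ofReal (1 / c) *
        ∫⁻ y in Ioi 0, ν (Ioi y) * ENNReal.ofReal ((a * y + b) * Real.exp (γ * y)) := by
        rw [lintegral_ofReal_mul_renKer hc hD (integrableOn_Ioi_id_of_mul_exp hγ0.le hint)
          (by fun_prop) fun x hx => by positivity]
        congr 1
        exact setLIntegral_congr_fun measurableSet_Ioi fun y hy => by
          rw [lintegral_Ioi_mul_exp_mul_kDens hc hD hγ hy.out.le]
    _ = ENNReal.ofReal (1 / c) * ∫⁻ z in Ioi 0, ENNReal.ofReal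
        (a / γ * (z * Real.exp (γ * z)) + (b / γ - a / γ ^ 2) * (Real.exp (γ * z) - 1)) ∂ν := by
        rw [lintegral_Ioi_measure_Ioi_mul ν (fun _ _ => hφ.intervalIntegrable _ _)
          (fun y hy => by positivity)]
        simp_rw [integral_affine_mul_exp hγ0.ne']
    _ = _ := by
        rw [← ofReal_integral_eq_lintegral_ofReal hΦ
          ((ae_restrict_iff' measurableSet_Ioi).2 (Eventually.of_forall fun z hz =>
            affine_mul_exp_primitive_nonneg hγ0.ne' ha hb hz.out.le)),
          ← ENNReal.ofReal_mul (by positivity)]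

end Tilted

theorem tilted_kernel_mean_general
    (c D γ : ℝ) (hc : 0 < c) (hD : 0 < D)
    (ν : Measure ℝ)
    (hγ0 : 0 < γ) (hγ : γ < c / D)
    (hint : IntegrableOn (fun z => z * Real.exp (γ * z)) (Ioi (0 : ℝ)) ν)
    (hlund : c * γ - D * γ ^ 2 = ∫ z in Ioi (0 : ℝ), (Real.exp (γ * z) - 1) ∂ν) :
    (∫ x in Ioi (0 : ℝ), x * Real.exp (γ * x) * renKer c D ν x)
      = ((∫ z in Ioi (0 : ℝ), z * Real.exp (γ * z) ∂ν) - c + 2 * D * γ)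
        / (γ * (c - D * γ)) := by
  have hβ : 0 < c / D - γ := sub_pos.2 hγ
  have hnonneg : 0 ≤ᵐ[volume.restrict (Ioi 0)]
      fun x => x * Real.exp (γ * x) * renKer c D ν x :=
    (ae_restrict_iff' measurableSet_Ioi).2 (Eventually.of_forall fun x hx =>
      mul_nonneg (by have := hx.out; positivity) (renKer_nonneg hc hD hx.out.le))
  have hmeas : Measurable fun x => x * Real.exp (γ * x) * renKer c D ν x :=
    (by fun_prop : Measurable fun x => x * Real.exp (γ * x)).mul (measurable_renKer ν)
  have hΦ0 : 0 ≤ ∫ z in Ioi 0, c / D / (c / D - γ) / γ * (z * Real.exp (γ * z)) +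
      (c / D / (c / D - γ) ^ 2 / γ - c / D / (c / D - γ) / γ ^ 2) * (Real.exp (γ * z) - 1) ∂ν :=
    setIntegral_nonneg measurableSet_Ioi fun z hz =>
      affine_mul_exp_primitive_nonneg hγ0.ne' (by positivity) (by positivity) hz.out.le
  rw [integral_eq_lintegral_of_nonneg_ae hnonneg hmeas.aestronglyMeasurable,
    lintegral_tilted_renKer hc hD hγ0 hγ hint, toReal_ofReal (by positivity),
    integral_add (hint.const_mul _)
      ((integrableOn_Ioi_exp_sub_one_of_mul_exp hγ0.le hint).const_mul _),
    integral_const_mul, integral_const_mul, ← hlund,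
    show c - D * γ = D * (c / D - γ) by field_simp]
  field_simp
  ring

/-- The mean of the exponentially tilted renewal density equals
`μ = (∫₀^∞ z e^{γz} ν(dz) − c + 2Dγ) / (γ (c − Dγ))` when the Lundberg identity holds. -/
theorem tilted_kernel_mean
    (c D γ : ℝ) (hc : 0 < c) (hD : 0 < D)
    (ν : Measure ℝ) [SigmaFinite ν]
    (hγ0 : 0 < γ) (hγ : γ < c / D)
    (hint : IntegrableOn (fun z => z * Real.exp (γ * z)) (Ioi (0 : ℝ)) ν)
    (hlund : c * γ - D * γ ^ 2 = ∫ z in Ioi (0 : ℝ), (Real.exp (γ * z) - 1) ∂ν) :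
    (∫ x in Ioi (0 : ℝ), x * Real.exp (γ * x) * renKer c D ν x)
      = ((∫ z in Ioi (0 : ℝ), z * Real.exp (γ * z) ∂ν) - c + 2 * D * γ)
        / (γ * (c - D * γ)) :=
  tilted_kernel_mean_general c D γ hc hD ν hγ0 hγ hint hlund
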